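/- Fix a linear order on [m]. If g, h ∈ F^m satisfy C_h ⊆ C_g, then every affine NBC set with respect to A_g is an affine NBC set with respect to A_h; consequently, for every k ≥ 0, the number of k-element affine NBC subsets with respect to A_g is at most the number of k-element affine NBC subsets with respect to A_h. -/

import Mathlib

open Matrix

variable {F : Type*} [Field F] {m n : ℕ}

/-- The subsystem `[A|J] x = [g|J]` is consistent. -/
def Consistent (A : Matrix (Fin m) (Fin n) F) (J : Finset (Fin m)) (g : Fin m → F) : Prop :=
  ∃ x : Fin n → F, ∀ j ∈ J, A j ⬝ᵥ x = g j

/-- `I` is a circuit of the matroid represented by the rows of `A`: the rows indexed by `I`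
are linearly dependent, but the rows indexed by any proper subset are linearly independent. -/
def IsCircuit (A : Matrix (Fin m) (Fin n) F) (I : Finset (Fin m)) : Prop :=
  ¬ LinearIndependent F (fun i : ↥I => A (i : Fin m)) ∧
    ∀ J : Finset (Fin m), J ⊂ I → LinearIndependent F (fun j : ↥J => A (j : Fin m))

/-- `c` is a circuit vector of the circuit `I`: `c · A = 0`, the entries of `c` indexed by `I`
are nonzero, and all other entries vanish. -/
def IsCircuitVector (A : Matrix (Fin m) (Fin n) F) (I : Finset (Fin m)) (c : Fin m → F) : Prop :=
  Matrix.vecMul c A = 0 ∧ (∀ i ∈ I, c i ≠ 0) ∧ (∀ i ∉ I, c i = 0)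
/-- `I_g`: the collection of index sets `J` for which `[A|J] x = [g|J]` is consistent. -/
def Iset (A : Matrix (Fin m) (Fin n) F) (g : Fin m → F) : Set (Finset (Fin m)) :=
  {J | Consistent A J g}

/-- `C_g = I_g ∩ C(M)`: the circuits whose subsystem is consistent. -/
def Cset (A : Matrix (Fin m) (Fin n) F) (g : Fin m → F) : Set (Finset (Fin m)) :=
  Iset A g ∩ {I | IsCircuit A I}

/-- A subsystem with linearly independent rows is consistent for any right-hand side. -/
lemma consistent_of_linearIndependent (A : Matrix (Fin m) (Fin n) F) (J : Finset (Fin m))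
    (hind : LinearIndependent F (fun j : ↥J => A (j : Fin m))) (h : Fin m → F) :
    Consistent A J h := by
  classical
  set B : Matrix ↥J (Fin n) F := fun j => A (j : Fin m) with hB
  have hrank : B.rank = Fintype.card ↥J := hind.rank_matrix
  have hsurj : Function.Surjective B.mulVecLin := by
    rw [← LinearMap.range_eq_top]
    apply Submodule.eq_top_of_finrank_eq
    rw [← Matrix.rank, hrank, Module.finrank_pi]
  obtain ⟨x, hx⟩ := hsurj (fun j : ↥J => h (j : Fin m))
  refine ⟨x, fun j hj => ?_⟩
  have := congr_fun hx ⟨j, hj⟩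
  exact this

/-- Any linearly dependent set of rows contains a circuit. -/
lemma exists_circuit_subset (A : Matrix (Fin m) (Fin n) F) (J : Finset (Fin m))
    (hdep : ¬ LinearIndependent F (fun j : ↥J => A (j : Fin m))) :
    ∃ I : Finset (Fin m), I ⊆ J ∧ IsCircuit A I := by
  classical
  set S : Finset (Finset (Fin m)) :=
    J.powerset.filter (fun I => ¬ LinearIndependent F (fun i : ↥I => A (i : Fin m))) with hS
  have hJS : J ∈ S := by
    simp [hS, Finset.mem_filter, Finset.mem_powerset, hdep]
  obtain ⟨I, hIS, hmin⟩ := S.exists_min_image Finset.card ⟨J, hJS⟩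
  rw [hS, Finset.mem_filter, Finset.mem_powerset] at hIS
  refine ⟨I, hIS.1, hIS.2, fun K hK => ?_⟩
  by_contra hKdep
  have hKS : K ∈ S := by
    rw [hS, Finset.mem_filter, Finset.mem_powerset]
    exact ⟨hK.subset.trans hIS.1, hKdep⟩
  have := hmin K hKS
  exact absurd (Finset.card_lt_card hK) (not_lt.mpr this)

section
variable (ord : LinearOrder (Fin m))

/-- `J` is an affine NBC set with respect to `A_g` (and a fixed linear order `ord` on
`[m]`): `J ∈ I_g` and `J` contains no affine broken circuit `I ∖ {max I}`, `I ∈ C_g`. -/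
def AffNBC (A : Matrix (Fin m) (Fin n) F) (g : Fin m → F) (J : Finset (Fin m)) : Prop :=
  J ∈ Iset A g ∧
    ∀ (I : Finset (Fin m)) (hI : I.Nonempty), I ∈ Cset A g →
      ¬ I.erase (@Finset.max' (Fin m) ord I hI) ⊆ J

/-- An affine NBC set has linearly independent rows. -/
lemma affNBC_linearIndependent (A : Matrix (Fin m) (Fin n) F) (g : Fin m → F)
    (J : Finset (Fin m)) (hJ : AffNBC ord A g J) :
    LinearIndependent F (fun j : ↥J => A (j : Fin m)) := by
  by_contra hdep
  obtain ⟨I, hIJ, hcirc⟩ := exists_circuit_subset A J hdep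
  have hIne : I.Nonempty := by
    rcases Finset.eq_empty_or_nonempty I with rfl | hne
    · exact absurd linearIndependent_empty_type hcirc.1
    · exact hne
  have hIcons : I ∈ Iset A g := by
    obtain ⟨x, hx⟩ := hJ.1
    exact ⟨x, fun j hj => hx j (hIJ hj)⟩
  exact hJ.2 I hIne ⟨hIcons, hcirc⟩
    ((Finset.erase_subset _ _).trans hIJ)

/-- If `C_h ⊆ C_g` then every affine NBC set w.r.t. `A_g` is affine NBC
w.r.t. `A_h`; hence for each `k` there are at most as many `k`-element affine NBC sets
w.r.t. `A_g` as w.r.t. `A_h`. -/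
theorem affNBC_mono_of_Cset_subset
    (hm : 0 < m) (hn : 0 < n) (A : Matrix (Fin m) (Fin n) F) (hrows : ∀ i, A i ≠ 0)
    (g h : Fin m → F) (hC : Cset A h ⊆ Cset A g) :
    (∀ J : Finset (Fin m), AffNBC ord A g J → AffNBC ord A h J) ∧
      ∀ k : ℕ,
        {J : Finset (Fin m) | AffNBC ord A g J ∧ J.card = k}.ncard ≤
          {J : Finset (Fin m) | AffNBC ord A h J ∧ J.card = k}.ncard := by
  have key : ∀ J : Finset (Fin m), AffNBC ord A g J → AffNBC ord A h J := by
    intro J hJ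
    constructor
    · exact consistent_of_linearIndependent A J (affNBC_linearIndependent ord A g J hJ) h
    · intro I hIne hIC
      exact hJ.2 I hIne (hC hIC)
  refine ⟨key, fun k => ?_⟩
  exact Set.ncard_le_ncard (fun J hJ => ⟨key J hJ.1, hJ.2⟩) (Set.toFinite _)

end
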